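/- arXiv:2011.15057 — 2 statements merged into one kernel-verified Lean document; each statement's English description precedes it below -/
import Mathlib

section
/- For every compact set K contained in Ω, Φ_ε converges to the constant Z = (1/2) log(Z₂/Z₁) uniformly on K as ε → 0⁺, i.e. sup_{x∈K} |Φ_ε(x) − Z| → 0 as ε → 0⁺. -/
open MeasureTheory Real Filter Set Topology

/-- The Laplacian: sum of second partial derivatives. -/
noncomputable def lap {d : ℕ} (f : EuclideanSpace ℝ (Fin d) → ℝ) (x : EuclideanSpace ℝ (Fin d)) : ℝ :=
  ∑ i : Fin d, fderiv ℝ (fun y => fderiv ℝ f y (EuclideanSpace.single i 1)) x (EuclideanSpace.single i 1)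

section PBaux

variable {d : ℕ}





lemma oneD_second_deriv_test {g g' : ℝ → ℝ} {L : ℝ} {U : Set ℝ} (hU : IsOpen U) (h0 : (0:ℝ) ∈ U)
    (hg : ∀ t ∈ U, HasDerivAt g (g' t) t) (hg' : HasDerivAt g' L 0)
    (hmax : IsLocalMax g 0) : L ≤ 0 := by
  by_contra hL
  push_neg at hL
  have h00 : g' 0 = 0 := hmax.hasDerivAt_eq_zero (hg 0 h0)
  have hslope : Tendsto (slope g' 0) (𝓝[≠] (0:ℝ)) (𝓝 L) :=
    hasDerivAt_iff_tendsto_slope.1 hg'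
  have hev : ∀ᶠ t in 𝓝[>] (0:ℝ), 0 < slope g' 0 t := by
    have : ∀ᶠ t in 𝓝[≠] (0:ℝ), 0 < slope g' 0 t :=
      hslope.eventually (eventually_gt_nhds hL)
    exact this.filter_mono (nhdsWithin_mono _ (fun t ht => ne_of_gt ht))
  have hevU : ∀ᶠ t in 𝓝[>] (0:ℝ), t ∈ U :=
    eventually_nhdsWithin_of_eventually_nhds (hU.eventually_mem h0)
  have hevM : ∀ᶠ t in 𝓝[>] (0:ℝ), g t ≤ g 0 :=
    eventually_nhdsWithin_of_eventually_nhds hmax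
  obtain ⟨δ, hδ0, hδ⟩ := mem_nhdsGT_iff_exists_Ioo_subset.1 (hev.and (hevU.and hevM))
  rw [Set.mem_Ioi] at hδ0
  set t₀ := δ/2 with ht₀def
  have ht₀ : t₀ ∈ Set.Ioo (0:ℝ) δ := ⟨by positivity, by linarith⟩
  have hsub : Set.Ioc (0:ℝ) t₀ ⊆ Set.Ioo (0:ℝ) δ := fun t ht => ⟨ht.1, lt_of_le_of_lt ht.2 ht₀.2⟩
  have hUicc : ∀ t ∈ Set.Icc (0:ℝ) t₀, t ∈ U := by
    intro t ht
    rcases eq_or_lt_of_le ht.1 with h | h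
    · rwa [← h]
    · exact (hδ (hsub ⟨h, ht.2⟩)).2.1
  have hmono : StrictMonoOn g (Set.Icc (0:ℝ) t₀) := by
    apply strictMonoOn_of_deriv_pos (convex_Icc _ _)
    · exact fun t ht => ((hg t (hUicc t ht)).continuousAt).continuousWithinAt
    · intro t ht
      rw [interior_Icc] at ht
      have htδ : t ∈ Set.Ioo (0:ℝ) δ := ⟨ht.1, lt_trans ht.2 ht₀.2⟩
      rw [(hg t (hδ htδ).2.1).deriv]
      have hsl := (hδ htδ).1
      have : slope g' 0 t = g' t / t := by
        simp [slope_def_field, h00]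
      rw [this] at hsl
      have ht0 : (0:ℝ) < t := ht.1
      have h2 : 0 < (g' t / t) * t := mul_pos hsl ht0
      rwa [div_mul_cancel₀ _ (ne_of_gt ht0)] at h2
  have := hmono (Set.left_mem_Icc.2 (le_of_lt ht₀.1)) (Set.right_mem_Icc.2 (le_of_lt ht₀.1)) ht₀.1
  exact absurd this (not_lt.2 (hδ (hsub ⟨ht₀.1, le_refl _⟩)).2.2)



lemma fderiv_apply_hasFDerivAt {f : EuclideanSpace ℝ (Fin d) → ℝ} {s : Set (EuclideanSpace ℝ (Fin d))}
    (hs : IsOpen s) (hf : ContDiffOn ℝ 2 f s) {x : EuclideanSpace ℝ (Fin d)} (hx : x ∈ s)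
    (v : EuclideanSpace ℝ (Fin d)) :
    HasFDerivAt (fun z => fderiv ℝ f z v)
      ((ContinuousLinearMap.apply ℝ ℝ v).comp (fderiv ℝ (fderiv ℝ f) x)) x := by
  have hF : ContDiffOn ℝ 1 (fderiv ℝ f) s := hf.fderiv_of_isOpen hs (by norm_num)
  have hFd : DifferentiableAt ℝ (fderiv ℝ f) x :=
    (hF.differentiableOn (by norm_num)).differentiableAt (hs.mem_nhds hx)
  exact ((ContinuousLinearMap.apply ℝ ℝ v).hasFDerivAt).comp x hFd.hasFDerivAt

lemma lap_nonpos_of_isLocalMax {f : EuclideanSpace ℝ (Fin d) → ℝ} {s : Set (EuclideanSpace ℝ (Fin d))}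
    (hs : IsOpen s) (hf : ContDiffOn ℝ 2 f s) {x : EuclideanSpace ℝ (Fin d)} (hx : x ∈ s)
    (hmax : IsLocalMax f x) : lap f x ≤ 0 := by
  apply Finset.sum_nonpos
  intro i _
  set e : EuclideanSpace ℝ (Fin d) := EuclideanSpace.single i 1 with he
  set ℓ : ℝ → EuclideanSpace ℝ (Fin d) := fun t => x + t • e with hℓ
  have hℓc : Continuous ℓ := continuous_const.add (continuous_id.smul continuous_const)
  have hℓ0 : ℓ 0 = x := by simp [hℓ]
  have hℓd : ∀ t : ℝ, HasDerivAt ℓ e t := by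
    intro t
    have : HasDerivAt (fun t : ℝ => t • e) ((1:ℝ) • e) t := (hasDerivAt_id t).smul_const e
    have h2 := this.const_add x
    rw [one_smul] at h2
    exact h2
  set U : Set ℝ := ℓ ⁻¹' s with hU
  have hUo : IsOpen U := hs.preimage hℓc
  have hU0 : (0:ℝ) ∈ U := by simp [hU, hℓ0, hx]
  set g' : ℝ → ℝ := fun t => fderiv ℝ f (ℓ t) e with hg'def
  have hg : ∀ t ∈ U, HasDerivAt (f ∘ ℓ) (g' t) t := by
    intro t ht
    have hdf : DifferentiableAt ℝ f (ℓ t) :=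
      (hf.differentiableOn (by norm_num)).differentiableAt (hs.mem_nhds ht)
    exact hdf.hasFDerivAt.comp_hasDerivAt t (hℓd t)
  have hA := fderiv_apply_hasFDerivAt hs hf hx e
  have hg' : HasDerivAt g' (fderiv ℝ (fun z => fderiv ℝ f z e) x e) 0 := by
    have hkey : fderiv ℝ (fun z => fderiv ℝ f z e) x
        = (ContinuousLinearMap.apply ℝ ℝ e).comp (fderiv ℝ (fderiv ℝ f) x) := hA.fderiv
    have hA' : HasFDerivAt (fun z => fderiv ℝ f z e)
        ((ContinuousLinearMap.apply ℝ ℝ e).comp (fderiv ℝ (fderiv ℝ f) x)) (ℓ 0) := by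
      rw [hℓ0]; exact hA
    have h1 := hA'.comp_hasDerivAt 0 (hℓd 0)
    rw [hkey]
    exact h1
  have hgmax : IsLocalMax (f ∘ ℓ) 0 := by
    rw [← hℓ0] at hmax
    exact hmax.comp_continuous hℓc.continuousAt
  exact oneD_second_deriv_test hUo hU0 hg hg' hgmax

lemma lap_sub {f g : EuclideanSpace ℝ (Fin d) → ℝ} {s : Set (EuclideanSpace ℝ (Fin d))}
    (hs : IsOpen s) (hf : ContDiffOn ℝ 2 f s) (hg : ContDiffOn ℝ 2 g s)
    {x : EuclideanSpace ℝ (Fin d)} (hx : x ∈ s) :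
    lap (fun y => f y - g y) x = lap f x - lap g x := by
  unfold lap
  rw [← Finset.sum_sub_distrib]
  apply Finset.sum_congr rfl
  intro i _
  set e : EuclideanSpace ℝ (Fin d) := EuclideanSpace.single i 1 with he
  have hev : (fun z => fderiv ℝ (fun y => f y - g y) z e)
      =ᶠ[𝓝 x] (fun z => fderiv ℝ f z e - fderiv ℝ g z e) := by
    filter_upwards [hs.mem_nhds hx] with z hz
    have hdf : DifferentiableAt ℝ f z := (hf.differentiableOn (by norm_num)).differentiableAt (hs.mem_nhds hz)
    have hdg : DifferentiableAt ℝ g z := (hg.differentiableOn (by norm_num)).differentiableAt (hs.mem_nhds hz)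
    rw [fderiv_fun_sub hdf hdg]
    rfl
  rw [hev.fderiv_eq]
  rw [fderiv_fun_sub (fderiv_apply_hasFDerivAt hs hf hx e).differentiableAt
      (fderiv_apply_hasFDerivAt hs hg hx e).differentiableAt]
  rfl

lemma lap_sub_const {f : EuclideanSpace ℝ (Fin d) → ℝ} (c : ℝ) (x : EuclideanSpace ℝ (Fin d)) :
    lap (fun y => f y - c) x = lap f x := by
  unfold lap
  apply Finset.sum_congr rfl
  intro i _
  have h1 : (fun z => fderiv ℝ (fun y => f y - c) z (EuclideanSpace.single i 1))
      = fun z => fderiv ℝ f z (EuclideanSpace.single i 1) := by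
    funext z
    rw [fderiv_sub_const]
  rw [h1]

lemma lap_const_sub {f : EuclideanSpace ℝ (Fin d) → ℝ} (c : ℝ) (x : EuclideanSpace ℝ (Fin d)) :
    lap (fun y => c - f y) x = - lap f x := by
  unfold lap
  rw [← Finset.sum_neg_distrib]
  apply Finset.sum_congr rfl
  intro i _
  have h1 : (fun z => fderiv ℝ (fun y => c - f y) z (EuclideanSpace.single i 1))
      = fun z => -(fderiv ℝ f z (EuclideanSpace.single i 1)) := by
    funext z
    rw [fderiv_const_sub]
    rfl
  rw [h1, fderiv_fun_neg]
  rfl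







/-- derivative data for a single coordinate function `x ↦ φ (x j)` -/
lemma coord_hasFDerivAt {φ : ℝ → ℝ} {φ' : ℝ → ℝ} (j : Fin d)
    (hφ : ∀ t, HasDerivAt φ (φ' t) t) (x : EuclideanSpace ℝ (Fin d)) :
    HasFDerivAt (fun y : EuclideanSpace ℝ (Fin d) => φ (y j))
      (φ' (x j) • (EuclideanSpace.proj j : EuclideanSpace ℝ (Fin d) →L[ℝ] ℝ)) x := by
  have hp : HasFDerivAt (fun y : EuclideanSpace ℝ (Fin d) => y j)
      (EuclideanSpace.proj j : EuclideanSpace ℝ (Fin d) →L[ℝ] ℝ) x :=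
    (EuclideanSpace.proj j : EuclideanSpace ℝ (Fin d) →L[ℝ] ℝ).hasFDerivAt
  exact (hφ (x j)).comp_hasFDerivAt x hp

lemma barrier_fderiv_apply (A k : ℝ) (p : EuclideanSpace ℝ (Fin d)) (y : EuclideanSpace ℝ (Fin d)) (i : Fin d) :
    fderiv ℝ (fun x : EuclideanSpace ℝ (Fin d) => ∑ j, A * Real.cosh (k * (x j - p j))) y
      (EuclideanSpace.single i 1)
      = A * (Real.sinh (k * (y i - p i)) * k) := by
  have hterm : ∀ j : Fin d, HasFDerivAt (fun x : EuclideanSpace ℝ (Fin d) => A * Real.cosh (k * (x j - p j)))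
      ((A * (Real.sinh (k * (y j - p j)) * k)) • (EuclideanSpace.proj j : EuclideanSpace ℝ (Fin d) →L[ℝ] ℝ)) y := by
    intro j
    apply coord_hasFDerivAt (φ := fun t => A * Real.cosh (k * (t - p j)))
      (φ' := fun t => A * (Real.sinh (k * (t - p j)) * k)) j
    intro t
    have h1 : HasDerivAt (fun t : ℝ => k * (t - p j)) k t := by
      simpa using ((hasDerivAt_id t).sub_const (p j)).const_mul k
    exact ((Real.hasDerivAt_cosh _).comp t h1).const_mul A
  have hw : HasFDerivAt (fun x : EuclideanSpace ℝ (Fin d) => ∑ j, A * Real.cosh (k * (x j - p j)))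
      (∑ j, (A * (Real.sinh (k * (y j - p j)) * k)) • (EuclideanSpace.proj j : EuclideanSpace ℝ (Fin d) →L[ℝ] ℝ)) y := by
    exact HasFDerivAt.fun_sum (fun j _ => hterm j)
  rw [hw.fderiv]
  rw [ContinuousLinearMap.sum_apply]
  have : ∀ j : Fin d, ((A * (Real.sinh (k * (y j - p j)) * k)) • (EuclideanSpace.proj j : EuclideanSpace ℝ (Fin d) →L[ℝ] ℝ))
      (EuclideanSpace.single i 1) = if i = j then A * (Real.sinh (k * (y j - p j)) * k) else 0 := by
    intro j
    rw [ContinuousLinearMap.smul_apply]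
    by_cases h : i = j
    · subst h; simp [EuclideanSpace.single_apply]
    · simp [EuclideanSpace.single_apply, h, Ne.symm h]
  simp only [this]
  simp

lemma barrier_lap (A k : ℝ) (p : EuclideanSpace ℝ (Fin d)) (x : EuclideanSpace ℝ (Fin d)) :
    lap (fun x : EuclideanSpace ℝ (Fin d) => ∑ j, A * Real.cosh (k * (x j - p j))) x
      = k^2 * ∑ j, A * Real.cosh (k * (x j - p j)) := by
  unfold lap
  rw [Finset.mul_sum]
  apply Finset.sum_congr rfl
  intro i _
  have h1 : (fun y : EuclideanSpace ℝ (Fin d) =>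
      fderiv ℝ (fun x : EuclideanSpace ℝ (Fin d) => ∑ j, A * Real.cosh (k * (x j - p j))) y
        (EuclideanSpace.single i 1))
      = fun y : EuclideanSpace ℝ (Fin d) => A * (Real.sinh (k * (y i - p i)) * k) := by
    funext y
    exact barrier_fderiv_apply A k p y i
  rw [h1]
  have h2 : HasFDerivAt (fun y : EuclideanSpace ℝ (Fin d) => A * (Real.sinh (k * (y i - p i)) * k))
      ((A * (Real.cosh (k * (x i - p i)) * k * k)) • (EuclideanSpace.proj i : EuclideanSpace ℝ (Fin d) →L[ℝ] ℝ)) x := by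
    apply coord_hasFDerivAt (φ := fun t => A * (Real.sinh (k * (t - p i)) * k))
      (φ' := fun t => A * (Real.cosh (k * (t - p i)) * k * k)) i
    intro t
    have hℓ : HasDerivAt (fun t : ℝ => k * (t - p i)) k t := by
      simpa using ((hasDerivAt_id t).sub_const (p i)).const_mul k
    have h3 := (((Real.hasDerivAt_sinh _).comp t hℓ).const_mul k).const_mul A
    have heq : (fun y => A * (k * ((Real.sinh ∘ fun t : ℝ => k * (t - p i)) y)))
        = (fun t : ℝ => A * (Real.sinh (k * (t - p i)) * k)) := by
      funext s; simp only [Function.comp_apply]; ring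
    have hval : A * (k * (Real.cosh (k * (t - p i)) * k)) = A * (Real.cosh (k * (t - p i)) * k * k) := by
      ring
    rw [heq, hval] at h3
    exact h3
  rw [h2.fderiv]
  rw [ContinuousLinearMap.smul_apply]
  have : (EuclideanSpace.proj i : EuclideanSpace ℝ (Fin d) →L[ℝ] ℝ) (EuclideanSpace.single i 1) = 1 := by
    simp [EuclideanSpace.single_apply]
  rw [this, smul_eq_mul]
  ring

lemma barrier_contDiff (A k : ℝ) (p : EuclideanSpace ℝ (Fin d)) {n : ℕ∞} :
    ContDiff ℝ n (fun x : EuclideanSpace ℝ (Fin d) => ∑ j, A * Real.cosh (k * (x j - p j))) := by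
  apply ContDiff.sum
  intro j _
  apply ContDiff.mul contDiff_const
  apply ContDiff.cosh
  exact contDiff_const.mul (ContDiff.sub (by exact (EuclideanSpace.proj (𝕜 := ℝ) j : EuclideanSpace ℝ (Fin d) →L[ℝ] ℝ).contDiff) contDiff_const)

lemma my_le_on_closure {Ω : Set (EuclideanSpace ℝ (Fin d))} (hΩopen : IsOpen Ω)
    {ψ : EuclideanSpace ℝ (Fin d) → ℝ} (hC2 : ContDiffOn ℝ 2 ψ Ω) (hcont : ContinuousOn ψ (closure Ω))
    (hΩbdd : Bornology.IsBounded Ω) (hΩne : Ω.Nonempty)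
    {ε c M : ℝ} (hε : 0 < ε) (hc : 0 < c) (hM : 0 ≤ M)
    (hPDE : ∀ x ∈ Ω, ε * lap ψ x = c * Real.sinh (ψ x))
    (hfront : ∀ x ∈ frontier Ω, ψ x ≤ M) :
    ∀ x ∈ closure Ω, ψ x ≤ M := by
  have hcmp : IsCompact (closure Ω) :=
    Metric.isCompact_of_isClosed_isBounded isClosed_closure hΩbdd.closure
  have hne : (closure Ω).Nonempty := hΩne.mono subset_closure
  obtain ⟨y, hy, hymax⟩ := hcmp.exists_isMaxOn hne hcont
  have hcases : y ∈ Ω ∨ y ∈ frontier Ω := by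
    have := (closure_eq_interior_union_frontier Ω) ▸ hy
    rwa [hΩopen.interior_eq] at this
  rcases hcases with hyΩ | hyf
  · have hloc : IsLocalMax ψ y :=
      hymax.isLocalMax (Filter.mem_of_superset (hΩopen.mem_nhds hyΩ) subset_closure)
    have hlap : lap ψ y ≤ 0 := lap_nonpos_of_isLocalMax hΩopen hC2 hyΩ hloc
    have heq := hPDE y hyΩ
    have hsinh : Real.sinh (ψ y) ≤ 0 := by nlinarith
    have hψy : ψ y ≤ 0 := by rwa [Real.sinh_nonpos_iff] at hsinh
    intro x hx
    exact le_trans (hymax hx) (le_trans hψy hM)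
  · intro x hx
    exact le_trans (hymax hx) (hfront y hyf)

lemma ball_bound {Ω : Set (EuclideanSpace ℝ (Fin d))} (hΩopen : IsOpen Ω)
    {ψ : EuclideanSpace ℝ (Fin d) → ℝ} (hC2 : ContDiffOn ℝ 2 ψ Ω)
    {ε c M r : ℝ} (hε : 0 < ε) (hc : 0 < c) (hM : 0 ≤ M) (hr : 0 < r)
    (hPDE : ∀ x ∈ Ω, ε * lap ψ x = c * Real.sinh (ψ x))
    (hbdd : ∀ x ∈ Ω, ψ x ≤ M)
    {x₀ : EuclideanSpace ℝ (Fin d)} (hball : Metric.closedBall x₀ r ⊆ Ω) (hd : 0 < d) :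
    ψ x₀ ≤ M * d / Real.cosh (Real.sqrt (c/ε) * r / Real.sqrt d) := by
  haveI : Nonempty (Fin d) := Fin.pos_iff_nonempty.1 hd
  set k : ℝ := Real.sqrt (c/ε) with hkdef
  have hk0 : 0 ≤ k := Real.sqrt_nonneg _
  have hk2 : ε * k^2 = c := by
    rw [hkdef, Real.sq_sqrt (le_of_lt (div_pos hc hε))]
    field_simp
  have hd0 : (0:ℝ) < Real.sqrt d := Real.sqrt_pos.2 (by exact_mod_cast hd)
  set Q : ℝ := Real.cosh (k * r / Real.sqrt d) with hQdef
  have hQ1 : 1 ≤ Q := Real.one_le_cosh _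
  have hQ0 : 0 < Q := lt_of_lt_of_le one_pos hQ1
  set A : ℝ := M / Q with hAdef
  have hA0 : 0 ≤ A := div_nonneg hM (le_of_lt hQ0)
  set w : EuclideanSpace ℝ (Fin d) → ℝ := fun x => ∑ j, A * Real.cosh (k * (x j - x₀ j)) with hwdef
  have hw0 : ∀ x, 0 ≤ w x := fun x =>
    Finset.sum_nonneg fun j _ => mul_nonneg hA0 (le_of_lt (Real.cosh_pos _))
  have hwcenter : w x₀ = A * d := by
    simp [hwdef, Real.cosh_zero, mul_comm]
  have hsphere : ∀ x : EuclideanSpace ℝ (Fin d), dist x x₀ = r → M ≤ w x := by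
    intro x hx
    have hsum : ∑ j, (x j - x₀ j)^2 = r^2 := by
      have h1 : dist x x₀ = Real.sqrt (∑ j, (x j - x₀ j)^2) := by
        rw [dist_eq_norm, EuclideanSpace.norm_eq]
        congr 1
        apply Finset.sum_congr rfl
        intro j _
        rw [Real.norm_eq_abs, sq_abs]
        congr 1
      rw [h1] at hx
      have := congrArg (fun t : ℝ => t^2) hx
      simpa [Real.sq_sqrt (Finset.sum_nonneg fun j _ => sq_nonneg _)] using this
    obtain ⟨j, hj⟩ : ∃ j : Fin d, r / Real.sqrt d ≤ |x j - x₀ j| := by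
      by_contra hcon
      push_neg at hcon
      have hlt : ∀ j : Fin d, (x j - x₀ j)^2 < r^2 / d := by
        intro j
        have h2 := hcon j
        have h3 : |x j - x₀ j|^2 < (r / Real.sqrt d)^2 := by
          apply sq_lt_sq' _ h2
          nlinarith [abs_nonneg (x j - x₀ j), div_pos hr hd0]
        rw [sq_abs] at h3
        calc (x j - x₀ j)^2 < (r / Real.sqrt d)^2 := h3
          _ = r^2 / d := by
              rw [div_pow, Real.sq_sqrt (by positivity : (0:ℝ) ≤ (d:ℝ))]
      have : ∑ j, (x j - x₀ j)^2 < ∑ _j : Fin d, r^2 / (d:ℝ) :=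
        Finset.sum_lt_sum_of_nonempty Finset.univ_nonempty (fun j _ => hlt j)
      rw [hsum] at this
      simp only [Finset.sum_const, Finset.card_univ, Fintype.card_fin, nsmul_eq_mul] at this
      rw [mul_div_cancel₀] at this
      · exact lt_irrefl _ this
      · exact_mod_cast (Nat.cast_pos.2 hd).ne'
    have hterm : A * Q ≤ A * Real.cosh (k * (x j - x₀ j)) := by
      apply mul_le_mul_of_nonneg_left _ hA0
      rw [hQdef]
      rw [Real.cosh_le_cosh]
      have h4 : |k * r / Real.sqrt d| = k * (r / Real.sqrt d) := by
        rw [abs_of_nonneg (by positivity), mul_div_assoc]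
      rw [h4, abs_mul, abs_of_nonneg hk0]
      exact mul_le_mul_of_nonneg_left hj hk0
    have hsum2 : A * Real.cosh (k * (x j - x₀ j)) ≤ w x := by
      apply Finset.single_le_sum (fun i _ => mul_nonneg hA0 (le_of_lt (Real.cosh_pos _))) (Finset.mem_univ j)
    have : M = A * Q := by rw [hAdef, div_mul_cancel₀ _ (ne_of_gt hQ0)]
    linarith
  -- comparison on the closed ball
  set S := Metric.closedBall x₀ r with hSdef
  have hScmp : IsCompact S := isCompact_closedBall x₀ r
  have hSne : S.Nonempty := ⟨x₀, Metric.mem_closedBall_self (le_of_lt hr)⟩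
  set v : EuclideanSpace ℝ (Fin d) → ℝ := fun x => ψ x - w x with hvdef
  have hvcont : ContinuousOn v S := by
    apply ContinuousOn.sub
    · exact (hC2.continuousOn).mono (Set.Subset.trans (by rfl) hball)
    · exact (barrier_contDiff A k x₀ (n := 2)).continuous.continuousOn
  obtain ⟨y, hyS, hymax⟩ := hScmp.exists_isMaxOn hSne hvcont
  have hkey : v y ≤ 0 := by
    by_contra hpos
    push_neg at hpos
    have hyΩ : y ∈ Ω := hball hyS
    have hydist : dist y x₀ < r := by
      rcases lt_or_eq_of_le (Metric.mem_closedBall.1 hyS) with h | h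
      · exact h
      · exfalso
        have h5 : ψ y ≤ M := hbdd y hyΩ
        have h6 : M ≤ w y := hsphere y h
        rw [hvdef] at hpos
        simp only at hpos
        linarith
    have hyB : y ∈ Metric.ball x₀ r := Metric.mem_ball.2 hydist
    have hloc : IsLocalMax v y :=
      hymax.isLocalMax (Filter.mem_of_superset ((Metric.isOpen_ball).mem_nhds hyB) Metric.ball_subset_closedBall)
    have hvC2 : ContDiffOn ℝ 2 v (Metric.ball x₀ r) := by
      apply ContDiffOn.sub
      · exact hC2.mono (Set.Subset.trans Metric.ball_subset_closedBall hball)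
      · exact (barrier_contDiff A k x₀ (n := 2)).contDiffOn
    have hlapv : lap v y ≤ 0 := lap_nonpos_of_isLocalMax Metric.isOpen_ball hvC2 hyB hloc
    have hlapsub : lap v y = lap ψ y - lap w y :=
      lap_sub Metric.isOpen_ball (hC2.mono (Set.Subset.trans Metric.ball_subset_closedBall hball))
        ((barrier_contDiff A k x₀ (n := 2)).contDiffOn) hyB
    have hlapw : lap w y = k^2 * w y := barrier_lap A k x₀ y
    have hPDEy : ε * lap ψ y = c * Real.sinh (ψ y) := hPDE y hyΩ
    have h7 : c * Real.sinh (ψ y) ≤ c * w y := by nlinarith [hw0 y]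
    have h8 : Real.sinh (ψ y) ≤ w y := le_of_mul_le_mul_left (by linarith) hc
    have h9 : w y ≤ Real.sinh (w y) := Real.self_le_sinh_iff.2 (hw0 y)
    have h10 : ψ y ≤ w y := by
      have := Real.sinh_le_sinh.1 (le_trans h8 h9)
      exact this
    rw [hvdef] at hpos
    simp only at hpos
    linarith
  have hvx₀ : v x₀ ≤ 0 := le_trans (hymax (Metric.mem_closedBall_self (le_of_lt hr))) hkey
  rw [hvdef] at hvx₀
  simp only at hvx₀
  have : ψ x₀ ≤ A * d := by rw [← hwcenter]; linarith
  calc ψ x₀ ≤ A * d := this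
    _ = M * d / Q := by rw [hAdef]; ring

end PBaux

/-- For every compact `K ⊆ Ω`, `Φ_ε` converges uniformly on `K` to the constant
`Z = (1/2) log(Z₂/Z₁)` as `ε → 0⁺`. -/
theorem potential_converges_to_Z_uniform_selective
    {d : ℕ} (hd : d = 2 ∨ d = 3)
    (Ω : Set (EuclideanSpace ℝ (Fin d)))
    (hΩopen : IsOpen Ω) (hΩne : Ω.Nonempty) (hΩbdd : Bornology.IsBounded Ω)
    (hΩconn : IsConnected Ω)
    (W : EuclideanSpace ℝ (Fin d) → ℝ) (hWsmooth : ContDiff ℝ (⊤ : ℕ∞) W)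
    (hWbdd : ∃ C, ∀ x, |W x| ≤ C)
    (Z₁ Z₂ : ℝ) (hZ₁ : 0 < Z₁) (hZ₂ : 0 < Z₂)
    (Φ : ℝ → EuclideanSpace ℝ (Fin d) → ℝ)
    (hΦC2 : ∀ ε > (0:ℝ), ContDiffOn ℝ 2 (Φ ε) Ω)
    (hΦC1 : ∀ ε > (0:ℝ), ContDiffOn ℝ 1 (Φ ε) (closure Ω))
    (hPB : ∀ ε > (0:ℝ), ∀ x ∈ Ω,
      -ε * lap (Φ ε) x = exp (-(Φ ε x)) / Z₁ - exp (Φ ε x) / Z₂)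
    (hbc : ∀ ε > (0:ℝ), ∀ x ∈ frontier Ω, Φ ε x = W x)
    (K : Set (EuclideanSpace ℝ (Fin d))) (hK : IsCompact K) (hKΩ : K ⊆ Ω) :
    Tendsto (fun ε => ⨆ x ∈ K, |Φ ε x - (1/2) * Real.log (Z₂ / Z₁)|)
      (𝓝[>] (0:ℝ)) (𝓝 0) := by
  have hdpos : 0 < d := by rcases hd with h | h <;> omega
  obtain ⟨C, hC⟩ := hWbdd
  set Zc : ℝ := (1/2) * Real.log (Z₂ / Z₁) with hZcdef
  set a : ℝ := Real.sqrt Z₁ with hadef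
  set b : ℝ := Real.sqrt Z₂ with hbdef
  have ha0 : 0 < a := Real.sqrt_pos.2 hZ₁
  have hb0 : 0 < b := Real.sqrt_pos.2 hZ₂
  have ha2 : a^2 = Z₁ := Real.sq_sqrt hZ₁.le
  have hb2 : b^2 = Z₂ := Real.sq_sqrt hZ₂.le
  set c : ℝ := 2 / (a * b) with hcdef
  have hc0 : 0 < c := by positivity
  -- exp Zc = b / a
  have hZclog : Zc = Real.log (b / a) := by
    rw [hZcdef, Real.log_div (ne_of_gt hb0) (ne_of_gt ha0), hadef, hbdef,
      Real.log_sqrt hZ₁.le, Real.log_sqrt hZ₂.le,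
      Real.log_div (ne_of_gt hZ₂) (ne_of_gt hZ₁)]
    ring
  have hexpZc : Real.exp Zc = b / a := by
    rw [hZclog, Real.exp_log (by positivity)]
  -- PDE in sinh form
  have hPDE : ∀ ε > (0:ℝ), ∀ x ∈ Ω,
      ε * lap (fun y => Φ ε y - Zc) x = c * Real.sinh (Φ ε x - Zc) := by
    intro ε hε x hx
    have hPB' := hPB ε hε x hx
    rw [lap_sub_const]
    have hsinh : Real.sinh (Φ ε x - Zc)
        = (Real.exp (Φ ε x) * a / b - Real.exp (-(Φ ε x)) * b / a) / 2 := by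
      rw [Real.sinh_eq, Real.exp_sub, hexpZc, neg_sub, Real.exp_sub, hexpZc, Real.exp_neg]
      field_simp
    rw [hsinh, hcdef]
    have hZ1 : Z₁ = a^2 := ha2.symm
    have hZ2 : Z₂ = b^2 := hb2.symm
    rw [hZ1, hZ2] at hPB'
    field_simp at hPB' ⊢
    nlinarith [hPB', Real.exp_pos (Φ ε x), Real.exp_pos (-(Φ ε x))]
  set M : ℝ := C + |Zc| with hMdef
  have hC0 : 0 ≤ C := le_trans (abs_nonneg _) (hC 0)
  have hM0 : 0 ≤ M := by positivity
  -- global bounds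
  have hup : ∀ ε > (0:ℝ), ∀ x ∈ closure Ω, Φ ε x - Zc ≤ M := by
    intro ε hε
    apply my_le_on_closure hΩopen ((hΦC2 ε hε).sub contDiffOn_const)
      (((hΦC1 ε hε).continuousOn).sub continuousOn_const) hΩbdd hΩne hε hc0 hM0
      (hPDE ε hε)
    intro x hxf
    rw [hbc ε hε x hxf, hMdef]
    have h1 := hC x
    have h2 := abs_le.1 h1
    have h3 := le_abs_self Zc
    have h4 := neg_abs_le Zc
    linarith
  have hdown : ∀ ε > (0:ℝ), ∀ x ∈ closure Ω, Zc - Φ ε x ≤ M := by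
    intro ε hε
    apply my_le_on_closure hΩopen (contDiffOn_const.sub (hΦC2 ε hε))
      (continuousOn_const.sub ((hΦC1 ε hε).continuousOn)) hΩbdd hΩne hε hc0 hM0
    · intro x hx
      rw [lap_const_sub]
      have h5 : Zc - Φ ε x = -(Φ ε x - Zc) := by ring
      rw [h5, Real.sinh_neg]
      have h6 := hPDE ε hε x hx
      rw [lap_sub_const] at h6
      linarith
    · intro x hxf
      rw [hbc ε hε x hxf, hMdef]
      have h1 := hC x
      have h2 := abs_le.1 h1
      have h3 := le_abs_self Zc
      have h4 := neg_abs_le Zc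
      linarith
  -- radius
  obtain ⟨r, hr0, hrsub⟩ := hK.exists_cthickening_subset_open hΩopen hKΩ
  have hball : ∀ x₀ ∈ K, Metric.closedBall x₀ r ⊆ Ω :=
    fun x₀ h => (Metric.closedBall_subset_cthickening h r).trans hrsub
  set m : ℝ → ℝ := fun ε => M * d / Real.cosh (Real.sqrt (c/ε) * r / Real.sqrt d) with hmdef
  have hm0 : ∀ ε, 0 ≤ m ε := by
    intro ε
    apply div_nonneg (by positivity) (le_of_lt (Real.cosh_pos _))
  -- pointwise bound on K
  have hpt : ∀ ε > (0:ℝ), ∀ x₀ ∈ K, |Φ ε x₀ - Zc| ≤ m ε := by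
    intro ε hε x₀ hx₀
    rw [abs_le]
    constructor
    · have := ball_bound hΩopen (contDiffOn_const.sub (hΦC2 ε hε)) hε hc0 hM0 hr0
        (fun x hx => by
          rw [lap_const_sub]
          have h5 : Zc - Φ ε x = -(Φ ε x - Zc) := by ring
          rw [h5, Real.sinh_neg]
          have h6 := hPDE ε hε x hx
          rw [lap_sub_const] at h6
          linarith)
        (fun x hx => hdown ε hε x (subset_closure hx)) (hball x₀ hx₀) hdpos
      rw [hmdef]
      simp only
      linarith
    · have := ball_bound hΩopen ((hΦC2 ε hε).sub contDiffOn_const) hε hc0 hM0 hr0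
        (hPDE ε hε) (fun x hx => hup ε hε x (subset_closure hx)) (hball x₀ hx₀) hdpos
      rw [hmdef]
      simp only
      linarith
  -- sup bounds
  have hS0 : ∀ ε : ℝ, 0 ≤ ⨆ x ∈ K, |Φ ε x - Zc| := by
    intro ε
    exact Real.iSup_nonneg fun x => Real.iSup_nonneg fun _ => abs_nonneg _
  have hSle : ∀ ε > (0:ℝ), (⨆ x ∈ K, |Φ ε x - Zc|) ≤ m ε := by
    intro ε hε
    apply Real.iSup_le _ (hm0 ε)
    intro x
    apply Real.iSup_le _ (hm0 ε)
    intro hx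
    exact hpt ε hε x hx
  -- limit of m
  have hsqrt : Tendsto Real.sqrt atTop atTop := by
    rw [tendsto_atTop_atTop]
    intro bb
    refine ⟨(max bb 0)^2, fun aa haa => ?_⟩
    have h7 : Real.sqrt ((max bb 0)^2) ≤ Real.sqrt aa := Real.sqrt_le_sqrt haa
    rw [Real.sqrt_sq (le_max_right bb 0)] at h7
    exact le_trans (le_max_left bb 0) h7
  have h1 : Tendsto (fun ε : ℝ => c / ε) (𝓝[>] 0) atTop := by
    have := tendsto_inv_nhdsGT_zero (𝕜 := ℝ)
    have h8 := this.const_mul_atTop hc0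
    simpa [div_eq_mul_inv] using h8
  have h2 : Tendsto (fun ε : ℝ => Real.sqrt (c/ε)) (𝓝[>] 0) atTop := hsqrt.comp h1
  have h3 : Tendsto (fun ε : ℝ => Real.sqrt (c/ε) * r / Real.sqrt d) (𝓝[>] 0) atTop := by
    have h9 : (0:ℝ) < r / Real.sqrt d := by
      apply div_pos hr0 (Real.sqrt_pos.2 (by exact_mod_cast hdpos))
    have h10 := h2.atTop_mul_const h9
    apply h10.congr
    intro ε
    rw [mul_div_assoc]
  have h4 : Tendsto (fun ε : ℝ => Real.cosh (Real.sqrt (c/ε) * r / Real.sqrt d)) (𝓝[>] 0) atTop := by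
    have hcoshge : ∀ y : ℝ, y ≤ Real.cosh y := by
      intro y
      rcases le_total y 0 with h | h
      · linarith [Real.one_le_cosh y]
      · calc y ≤ Real.sinh y := Real.self_le_sinh_iff.2 h
          _ ≤ Real.cosh y := by
            rw [Real.sinh_eq, Real.cosh_eq]
            have := Real.exp_pos (-y)
            linarith
    exact tendsto_atTop_mono (fun ε => hcoshge _) h3
  have hmlim : Tendsto m (𝓝[>] 0) (𝓝 0) := h4.const_div_atTop (M * d)
  -- squeeze
  apply squeeze_zero' (Filter.Eventually.of_forall hS0)
    _ hmlim
  filter_upwards [self_mem_nhdsWithin] with ε hε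
  exact hSle ε hε
end

section
/- Maximum principle for the blocking Poisson–Boltzmann equation: for every x in the closure of Ω, inf_{∂Ω} W ≤ Φ(x) ≤ sup_{∂Ω} W. -/
open MeasureTheory Real Filter Set Topology

lemma second_deriv_nonpos (g g' : ℝ → ℝ) (δ q : ℝ) (hδ : 0 < δ)
    (hg : ∀ t ∈ Metric.ball (0:ℝ) δ, HasDerivAt g (g' t) t)
    (hmax : ∀ t ∈ Metric.ball (0:ℝ) δ, g t ≤ g 0)
    (hq : HasDerivAt g' q 0) : q ≤ 0 := by
  by_contra h
  push_neg at h
  have h0 : IsLocalMax g 0 := by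
    filter_upwards [Metric.ball_mem_nhds (0:ℝ) hδ] with t ht using hmax t ht
  have hg'0 : g' 0 = 0 := h0.hasDerivAt_eq_zero (hg 0 (Metric.mem_ball_self hδ))
  have hs : Tendsto (fun t => g' t / t) (𝓝[>] (0:ℝ)) (𝓝 q) := by
    have h1 := hasDerivAt_iff_tendsto_slope.mp hq
    have h2 : Tendsto (slope g' 0) (𝓝[>] (0:ℝ)) (𝓝 q) :=
      h1.mono_left (nhdsWithin_mono 0 (fun t ht => ne_of_gt ht))
    refine h2.congr (fun t => ?_)
    rw [slope_def_field, hg'0, sub_zero, sub_zero]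
  have hev : ∀ᶠ t in 𝓝[>] (0:ℝ), 0 < g' t := by
    filter_upwards [hs.eventually (eventually_gt_nhds h), self_mem_nhdsWithin] with t ht ht0
    have ht0' : (0:ℝ) < t := ht0
    have := mul_pos ht ht0'
    rwa [div_mul_cancel₀ _ (ne_of_gt ht0')] at this
  obtain ⟨ε₂, hε₂, hball⟩ := Metric.mem_nhdsWithin_iff.mp hev
  set t₀ := min δ ε₂ / 2 with ht₀def
  have ht₀pos : 0 < t₀ := by positivity
  have ht₀δ : t₀ < δ := by
    have : min δ ε₂ ≤ δ := min_le_left _ _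
    linarith
  have ht₀ε₂ : t₀ < ε₂ := by
    have : min δ ε₂ ≤ ε₂ := min_le_right _ _
    linarith
  have hsub : Icc (0:ℝ) t₀ ⊆ Metric.ball (0:ℝ) δ := by
    intro x hx
    rw [Metric.mem_ball, Real.dist_eq, sub_zero, abs_lt]
    constructor <;> [linarith [hx.1]; linarith [hx.2]]
  have hmono : StrictMonoOn g (Icc (0:ℝ) t₀) := by
    apply strictMonoOn_of_deriv_pos (convex_Icc _ _)
    · intro x hx
      exact (hg x (hsub hx)).continuousAt.continuousWithinAt
    · intro x hx
      rw [interior_Icc] at hx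
      rw [(hg x (hsub ⟨le_of_lt hx.1, le_of_lt hx.2⟩)).deriv]
      apply hball
      constructor
      · rw [Metric.mem_ball, Real.dist_eq, sub_zero, abs_lt]
        constructor <;> [linarith [hx.1]; linarith [hx.2, ht₀ε₂]]
      · exact hx.1
  have := hmono (left_mem_Icc.mpr (le_of_lt ht₀pos)) (right_mem_Icc.mpr (le_of_lt ht₀pos)) ht₀pos
  have hle := hmax t₀ (hsub (right_mem_Icc.mpr (le_of_lt ht₀pos)))
  linarith

lemma lap_nonpos {d : ℕ} {Ω : Set (EuclideanSpace ℝ (Fin d))} (hΩopen : IsOpen Ω)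
    {Φ : EuclideanSpace ℝ (Fin d) → ℝ} (hΦC2 : ContDiffOn ℝ 2 Φ Ω)
    {x₀ : EuclideanSpace ℝ (Fin d)} (hx₀ : x₀ ∈ Ω)
    (hmax : ∀ x ∈ Ω, Φ x ≤ Φ x₀) : lap Φ x₀ ≤ 0 := by
  obtain ⟨δ, hδ, hball⟩ := Metric.isOpen_iff.mp hΩopen x₀ hx₀
  have hΦdiff : DifferentiableOn ℝ Φ Ω := hΦC2.differentiableOn (by norm_num)
  have hF : ContDiffOn ℝ 1 (fderiv ℝ Φ) Ω := hΦC2.fderiv_of_isOpen hΩopen (by norm_num)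
  apply Finset.sum_nonpos
  intro i _
  set e := EuclideanSpace.single i (1:ℝ) with he
  have hnorme : ‖e‖ = 1 := by rw [he, EuclideanSpace.norm_single]; norm_num
  set G : EuclideanSpace ℝ (Fin d) → ℝ := fun y => fderiv ℝ Φ y e with hGdef
  have hG : ContDiffOn ℝ 1 G Ω := by
    have := (ContinuousLinearMap.apply ℝ ℝ e).contDiff (n := 1)
    exact this.comp_contDiffOn hF
  have hGdiff : DifferentiableAt ℝ G x₀ :=
    ((hG.differentiableOn one_ne_zero) x₀ hx₀).differentiableAt (hΩopen.mem_nhds hx₀)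
  -- the curve
  set L : ℝ → EuclideanSpace ℝ (Fin d) := fun t => x₀ + t • e with hLdef
  have hLmem : ∀ t ∈ Metric.ball (0:ℝ) δ, L t ∈ Ω := by
    intro t ht
    apply hball
    rw [Metric.mem_ball] at ht ⊢
    rw [Real.dist_eq, sub_zero] at ht
    rw [dist_eq_norm]
    simp only [hLdef, add_sub_cancel_left, norm_smul, hnorme, Real.norm_eq_abs, mul_one]
    exact ht
  have hLderiv : ∀ t : ℝ, HasDerivAt L e t := by
    intro t
    have : HasDerivAt (fun s : ℝ => s • e) ((1:ℝ) • e) t := (hasDerivAt_id t).smul_const e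
    simpa [hLdef, one_smul] using this.const_add x₀
  have hg : ∀ t ∈ Metric.ball (0:ℝ) δ, HasDerivAt (fun s => Φ (L s)) (G (L t)) t := by
    intro t ht
    have hmem := hLmem t ht
    have hΦat : HasFDerivAt Φ (fderiv ℝ Φ (L t)) (L t) :=
      ((hΦdiff (L t) hmem).differentiableAt (hΩopen.mem_nhds hmem)).hasFDerivAt
    exact hΦat.comp_hasDerivAt t (hLderiv t)
  have hg' : HasDerivAt (fun t => G (L t)) (fderiv ℝ G x₀ e) 0 := by
    have hGat : HasFDerivAt G (fderiv ℝ G x₀) (L 0) := by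
      have : L 0 = x₀ := by simp [hLdef]
      rw [this]
      exact hGdiff.hasFDerivAt
    exact hGat.comp_hasDerivAt 0 (hLderiv 0)
  have hgmax : ∀ t ∈ Metric.ball (0:ℝ) δ, Φ (L t) ≤ Φ (L 0) := by
    intro t ht
    have : L 0 = x₀ := by simp [hLdef]
    rw [this]
    exact hmax (L t) (hLmem t ht)
  have := second_deriv_nonpos (fun s => Φ (L s)) (fun t => G (L t)) δ (fderiv ℝ G x₀ e) hδ hg hgmax hg'
  exact this

lemma strict_int {d : ℕ} {Ω : Set (EuclideanSpace ℝ (Fin d))}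
    (hΩopen : IsOpen Ω) (hΩbdd : Bornology.IsBounded Ω)
    {f : EuclideanSpace ℝ (Fin d) → ℝ} (hf : ContinuousOn f (closure Ω))
    {c : ℝ} (hle : ∀ y ∈ Ω, f y ≤ c)
    {z : EuclideanSpace ℝ (Fin d)} (hz : z ∈ Ω) (hlt : f z < c) :
    ∫ y in Ω, f y < c * (volume Ω).toReal := by
  have hK : IsCompact (closure Ω) :=
    Metric.isCompact_of_isClosed_isBounded isClosed_closure hΩbdd.closure
  have hint : IntegrableOn f Ω := (hf.integrableOn_compact hK).mono_set subset_closure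
  have hμfin : volume Ω < ⊤ := lt_of_le_of_lt (measure_mono subset_closure) hK.measure_lt_top
  -- continuity at z gives a ball where f < m
  set m := (f z + c)/2 with hm
  have hmc : m < c := by rw [hm]; linarith
  have hca : ContinuousAt f z :=
    hf.continuousAt (mem_of_superset (hΩopen.mem_nhds hz) subset_closure)
  have hev : ∀ᶠ y in 𝓝 z, f y < m := hca.eventually_lt_const (by rw [hm]; linarith)
  obtain ⟨r₁, hr₁, hball₁⟩ := Metric.eventually_nhds_iff_ball.mp hev
  obtain ⟨r₂, hr₂, hball₂⟩ := Metric.isOpen_iff.mp hΩopen z hz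
  set r := min r₁ r₂ with hr
  have hrpos : 0 < r := lt_min hr₁ hr₂
  have hbΩ : Metric.ball z r ⊆ Ω := fun y hy => hball₂ (Metric.ball_subset_ball (min_le_right _ _) hy)
  have hbm : ∀ y ∈ Metric.ball z r, f y ≤ m :=
    fun y hy => le_of_lt (hball₁ y (Metric.ball_subset_ball (min_le_left _ _) hy))
  set B := Metric.ball z r with hB
  have hmeasB : MeasurableSet B := Metric.isOpen_ball.measurableSet
  have hmeasΩ : MeasurableSet Ω := hΩopen.measurableSet
  have hsplit : Ω = B ∪ (Ω \ B) := (Set.union_diff_cancel hbΩ).symm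
  have hdisj : Disjoint B (Ω \ B) := Set.disjoint_sdiff_right
  have hintB : IntegrableOn f B := hint.mono_set hbΩ
  have hintD : IntegrableOn f (Ω \ B) := hint.mono_set Set.diff_subset
  have heq : ∫ y in Ω, f y = (∫ y in B, f y) + ∫ y in Ω \ B, f y := by
    conv_lhs => rw [hsplit]
    exact setIntegral_union hdisj (hmeasΩ.diff hmeasB) hintB hintD
  have hvolB : volume B < ⊤ := lt_of_le_of_lt (measure_mono hbΩ) hμfin
  have h1 : ∫ y in B, f y ≤ m * (volume B).toReal := by
    have := setIntegral_mono_on hintB (integrableOn_const hvolB.ne) hmeasB hbm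
    rwa [setIntegral_const, smul_eq_mul, measureReal_def, mul_comm] at this
  have h2 : ∫ y in Ω \ B, f y ≤ c * (volume (Ω \ B)).toReal := by
    have := setIntegral_mono_on hintD
      (integrableOn_const (lt_of_le_of_lt (measure_mono Set.diff_subset) hμfin).ne)
      (hmeasΩ.diff hmeasB) (fun y hy => hle y hy.1)
    rwa [setIntegral_const, smul_eq_mul, measureReal_def, mul_comm] at this
  have hvadd : (volume B).toReal + (volume (Ω \ B)).toReal = (volume Ω).toReal := by
    rw [← ENNReal.toReal_add hvolB.ne (lt_of_le_of_lt (measure_mono Set.diff_subset) hμfin).ne]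
    congr 1
    rw [← measure_union hdisj (hmeasΩ.diff hmeasB), ← hsplit]
  have hvolBpos : 0 < (volume B).toReal :=
    ENNReal.toReal_pos (Metric.isOpen_ball.measure_pos volume ⟨z, Metric.mem_ball_self hrpos⟩).ne' hvolB.ne
  calc ∫ y in Ω, f y ≤ m * (volume B).toReal + c * (volume (Ω \ B)).toReal := by
        rw [heq]; exact add_le_add h1 h2
    _ < c * (volume B).toReal + c * (volume (Ω \ B)).toReal := by
        have := mul_lt_mul_of_pos_right hmc hvolBpos
        linarith
    _ = c * (volume Ω).toReal := by rw [← mul_add, hvadd]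

lemma frontier_nonempty {d : ℕ} (hd : 0 < d) {Ω : Set (EuclideanSpace ℝ (Fin d))}
    (hΩopen : IsOpen Ω) (hΩne : Ω.Nonempty) (hΩbdd : Bornology.IsBounded Ω) :
    (frontier Ω).Nonempty := by
  by_contra h
  rw [Set.not_nonempty_iff_eq_empty] at h
  have hfr : closure Ω \ Ω = ∅ := by rw [← hΩopen.frontier_eq, h]
  have hclosed : IsClosed Ω := by
    rw [← closure_eq_iff_isClosed]
    apply subset_antisymm _ subset_closure
    intro x hx
    by_contra hxΩ
    rw [Set.eq_empty_iff_forall_notMem] at hfr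
    exact hfr x ⟨hx, hxΩ⟩
  rcases isClopen_iff.mp ⟨hclosed, hΩopen⟩ with h1 | h2
  · exact hΩne.ne_empty h1
  · obtain ⟨x, hx⟩ := hΩne
    obtain ⟨r, hr⟩ := (Metric.isBounded_iff_subset_ball x).mp hΩbdd
    set e := EuclideanSpace.single (⟨0, hd⟩ : Fin d) (1:ℝ) with he
    have hmem : x + (|r|+1) • e ∈ Metric.ball x r := hr (h2 ▸ Set.mem_univ _)
    rw [Metric.mem_ball, dist_eq_norm, add_sub_cancel_left, norm_smul, he,
      EuclideanSpace.norm_single] at hmem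
    simp only [Real.norm_eq_abs] at hmem
    rw [abs_one, mul_one, abs_of_nonneg (by positivity : (0:ℝ) ≤ |r|+1)] at hmem
    have := le_abs_self r
    linarith

lemma lap_neg {d : ℕ} (f : EuclideanSpace ℝ (Fin d) → ℝ) (x : EuclideanSpace ℝ (Fin d)) :
    lap (fun y => -f y) x = - lap f x := by
  unfold lap
  rw [← Finset.sum_neg_distrib]
  apply Finset.sum_congr rfl
  intro i _
  have h1 : (fun y => fderiv ℝ (fun z => -f z) y (EuclideanSpace.single i 1))
      = fun y => -(fderiv ℝ f y (EuclideanSpace.single i 1)) := by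
    funext y
    rw [fderiv_fun_neg]
    simp
  rw [h1, fderiv_fun_neg]
  simp

lemma aux_max {d : ℕ} (hd : 0 < d)
    {Ω : Set (EuclideanSpace ℝ (Fin d))}
    (hΩopen : IsOpen Ω) (hΩne : Ω.Nonempty) (hΩbdd : Bornology.IsBounded Ω)
    {I₀ ε : ℝ} (hI₀ : 0 < I₀) (hε : 0 < ε)
    {Φ : EuclideanSpace ℝ (Fin d) → ℝ}
    (hΦcont : ContinuousOn Φ (closure Ω))
    (hΦC2 : ContDiffOn ℝ 2 Φ Ω)
    (hPB : ∀ x ∈ Ω,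
      -ε * lap Φ x
        = I₀ * (exp (-(Φ x)) / (∫ y in Ω, exp (-(Φ y)))
            - exp (Φ x) / (∫ y in Ω, exp (Φ y)))) :
    ∃ x₀ ∈ frontier Ω, ∀ x ∈ closure Ω, Φ x ≤ Φ x₀ := by
  have hK : IsCompact (closure Ω) :=
    Metric.isCompact_of_isClosed_isBounded isClosed_closure hΩbdd.closure
  obtain ⟨x₀, hx₀K, hmaxOn⟩ := hK.exists_isMaxOn (hΩne.mono subset_closure) hΦcont
  have hmax : ∀ x ∈ closure Ω, Φ x ≤ Φ x₀ := fun x hx => hmaxOn hx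
  by_cases hx₀Ω : x₀ ∈ Ω
  · -- interior maximum
    by_cases hconst : ∀ y ∈ Ω, Φ y = Φ x₀
    · -- Φ constant on Ω, hence on closure
      obtain ⟨z, hz⟩ := frontier_nonempty hd hΩopen hΩne hΩbdd
      refine ⟨z, hz, fun x hx => ?_⟩
      have hzc : z ∈ closure Ω := by
        rw [hΩopen.frontier_eq] at hz; exact hz.1
      have hnb : (𝓝[Ω] z).NeBot := mem_closure_iff_nhdsWithin_neBot.mp hzc
      have ht1 : Tendsto Φ (𝓝[Ω] z) (𝓝 (Φ z)) :=
        ((hΦcont z hzc).mono_left (nhdsWithin_mono z subset_closure))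
      have ht2 : Tendsto Φ (𝓝[Ω] z) (𝓝 (Φ x₀)) := by
        apply Tendsto.congr' _ tendsto_const_nhds
        filter_upwards [self_mem_nhdsWithin] with y hy
        exact (hconst y hy).symm
      have hΦz : Φ z = Φ x₀ := tendsto_nhds_unique ht1 ht2
      rw [hΦz]
      exact hmax x hx
    · -- contradiction via PDE
      exfalso
      push_neg at hconst
      obtain ⟨z, hzΩ, hzne⟩ := hconst
      have hzlt : Φ z < Φ x₀ := lt_of_le_of_ne (hmax z (subset_closure hzΩ)) hzne
      set M := Φ x₀ with hM
      set μ := (volume Ω).toReal with hμ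
      have hμfin : volume Ω < ⊤ := lt_of_le_of_lt (measure_mono subset_closure) hK.measure_lt_top
      have hμpos : 0 < μ :=
        ENNReal.toReal_pos (hΩopen.measure_pos volume hΩne).ne' hμfin.ne
      set A := ∫ y in Ω, exp (-(Φ y)) with hA
      set B := ∫ y in Ω, exp (Φ y) with hB
      -- B < exp M * μ
      have hBlt : B < exp M * μ := by
        have hcont : ContinuousOn (fun y => exp (Φ y)) (closure Ω) :=
          Real.continuous_exp.comp_continuousOn hΦcont
        exact strict_int hΩopen hΩbdd hcont
          (fun y hy => exp_le_exp.mpr (hmax y (subset_closure hy)))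
          hzΩ (exp_lt_exp.mpr hzlt)
      -- exp (-M) * μ < A
      have hAgt : exp (-M) * μ < A := by
        have hcont : ContinuousOn (fun y => -exp (-(Φ y))) (closure Ω) :=
          (Real.continuous_exp.comp_continuousOn hΦcont.neg).neg
        have h := strict_int hΩopen hΩbdd hcont
          (c := -exp (-M))
          (fun y hy => neg_le_neg (exp_le_exp.mpr (neg_le_neg (hmax y (subset_closure hy)))))
          hzΩ (by
            have : exp (-M) < exp (-(Φ z)) := exp_lt_exp.mpr (by linarith)
            linarith)
        rw [integral_neg] at h
        have : -A < -exp (-M) * μ := h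
        linarith
      have hApos : 0 < A := lt_trans (by positivity) hAgt
      have hBpos : 0 < B := by
        -- lower bound via min on compact set
        obtain ⟨w, hwK, hminOn⟩ := hK.exists_isMinOn (hΩne.mono subset_closure) hΦcont
        have hint : IntegrableOn (fun y => exp (Φ y)) Ω :=
          ((Real.continuous_exp.comp_continuousOn hΦcont).integrableOn_compact hK).mono_set
            subset_closure
        have hle : ∫ y in Ω, exp (Φ w) ≤ B := by
          apply setIntegral_mono_on (integrableOn_const hμfin.ne) hint
            hΩopen.measurableSet
          intro y hy
          exact exp_le_exp.mpr (hminOn (subset_closure hy))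
        rw [setIntegral_const, smul_eq_mul, measureReal_def] at hle
        have : 0 < μ * exp (Φ w) := by positivity
        linarith
      -- PDE at x₀
      have hlap : lap Φ x₀ ≤ 0 :=
        lap_nonpos hΩopen hΦC2 hx₀Ω (fun x hx => hmax x (subset_closure hx))
      have hPBx := hPB x₀ hx₀Ω
      have h2 : exp (-M) / A < 1 / μ := by
        rw [div_lt_div_iff₀ hApos hμpos]
        linarith
      have h3 : 1 / μ < exp M / B := by
        rw [div_lt_div_iff₀ hμpos hBpos]
        linarith
      have hrhs : exp (-(Φ x₀)) / A - exp (Φ x₀) / B < 0 := by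
        have : exp (-(Φ x₀)) / A = exp (-M) / A := rfl
        linarith
      nlinarith [hPBx, mul_pos hI₀ (neg_pos.mpr hrhs)]
  · -- boundary maximum
    refine ⟨x₀, ?_, hmax⟩
    rw [hΩopen.frontier_eq]
    exact ⟨hx₀K, hx₀Ω⟩

/-- Maximum principle for the blocking Poisson–Boltzmann equation:
`inf_{∂Ω} W ≤ Φ(x) ≤ sup_{∂Ω} W` for every `x` in the closure of `Ω`. -/
theorem max_principle_blocking_poisson_boltzmann
    {d : ℕ} (hd : d = 2 ∨ d = 3)
    (Ω : Set (EuclideanSpace ℝ (Fin d)))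
    (hΩopen : IsOpen Ω) (hΩne : Ω.Nonempty) (hΩbdd : Bornology.IsBounded Ω)
    (W : EuclideanSpace ℝ (Fin d) → ℝ) (hWcont : Continuous W)
    (hWbdd : ∃ C, ∀ x, |W x| ≤ C)
    (I₀ ε : ℝ) (hI₀ : 0 < I₀) (hε : 0 < ε)
    (Φ : EuclideanSpace ℝ (Fin d) → ℝ)
    (hΦcont : ContinuousOn Φ (closure Ω))
    (hΦC2 : ContDiffOn ℝ 2 Φ Ω)
    (hPB : ∀ x ∈ Ω,
      -ε * lap Φ x
        = I₀ * (exp (-(Φ x)) / (∫ y in Ω, exp (-(Φ y)))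
            - exp (Φ x) / (∫ y in Ω, exp (Φ y))))
    (hbc : ∀ x ∈ frontier Ω, Φ x = W x) :
    ∀ x ∈ closure Ω,
      sInf (W '' frontier Ω) ≤ Φ x ∧ Φ x ≤ sSup (W '' frontier Ω) := by
  have hd0 : 0 < d := by rcases hd with h | h <;> omega
  obtain ⟨C, hC⟩ := hWbdd
  have hbddAbove : BddAbove (W '' frontier Ω) := by
    refine ⟨C, ?_⟩
    rintro y ⟨x, _, rfl⟩
    exact (abs_le.mp (hC x)).2
  have hbddBelow : BddBelow (W '' frontier Ω) := by
    refine ⟨-C, ?_⟩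
    rintro y ⟨x, _, rfl⟩
    exact (abs_le.mp (hC x)).1
  -- upper bound
  obtain ⟨x₀, hx₀fr, hx₀max⟩ := aux_max hd0 hΩopen hΩne hΩbdd hI₀ hε hΦcont hΦC2 hPB
  -- lower bound: apply aux_max to -Φ
  have hPBneg : ∀ x ∈ Ω,
      -ε * lap (fun y => -Φ y) x
        = I₀ * (exp (-(-Φ x)) / (∫ y in Ω, exp (-(-Φ y)))
            - exp (-Φ x) / (∫ y in Ω, exp (-Φ y))) := by
    intro x hx
    have h := hPB x hx
    rw [lap_neg]
    simp only [neg_neg]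
    ring_nf
    ring_nf at h
    linarith
  obtain ⟨x₁, hx₁fr, hx₁max⟩ := aux_max hd0 hΩopen hΩne hΩbdd hI₀ hε
    hΦcont.neg hΦC2.neg hPBneg
  intro x hx
  constructor
  · have h1 : Φ x₁ ≤ Φ x := by
      have := hx₁max x hx
      simpa using this
    have h2 : sInf (W '' frontier Ω) ≤ W x₁ := csInf_le hbddBelow ⟨x₁, hx₁fr, rfl⟩
    rw [← hbc x₁ hx₁fr] at h2
    linarith
  · have h1 : Φ x ≤ Φ x₀ := hx₀max x hx
    have h2 : W x₀ ≤ sSup (W '' frontier Ω) := le_csSup hbddAbove ⟨x₀, hx₀fr, rfl⟩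
    rw [← hbc x₀ hx₀fr] at h2
    linarith
end
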